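/- arXiv:1908.05690 — 5 statements merged into one kernel-verified Lean document; each statement's English description precedes it below -/
import Mathlib

section
/- Let M[G;I,Λ;A] be a matrix semigroup that is normalised with respect to the idempotent e = (i₀,1,λ₀), and let Γ be the subgroup of G generated by the entries a_{λi} of the sandwich matrix A. Then the subsemigroup of M[G;I,Λ;A] generated by its idempotents is exactly I × Γ × Λ, i.e. it equals the matrix semigroup M[Γ;I,Λ;A]. -/
/-- Multiplication of the Rees matrix semigroup `M[G; I, Λ; A]` on the set `I × G × Λ`:
`(i,g,λ)(j,h,μ) = (i, g a_{λj} h, μ)`. -/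
def reesMul {G I Λ : Type*} [Group G] (A : Λ → I → G) (p q : I × G × Λ) : I × G × Λ :=
  (p.1, p.2.1 * A p.2.2 q.1 * q.2.1, q.2.2)

/-- Membership in the subsemigroup generated by a set `s`, for a binary operation `mul`. -/
inductive SemigroupClosure {α : Type*} (mul : α → α → α) (s : Set α) : α → Prop
  | base {a : α} : a ∈ s → SemigroupClosure mul s a
  | mul {a b : α} : SemigroupClosure mul s a → SemigroupClosure mul s b →
      SemigroupClosure mul s (mul a b)

/-!
Every idempotent has the form `(i, a_{λi}⁻¹, λ)` and each product picks up one more entry of `A`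
as a factor, so the middle coordinate of a product of idempotents lies in `Γ`. Conversely, by
normalisation `(i,1,λ₀)` and `(i₀,1,λ)` are idempotents, whose products give every `(i, 1, λ)`;
from these and the idempotents `(j, a_{μj}⁻¹, μ)` one builds `(i, a_{μj}^{±1}, λ)`, and
`(i,g,λ₀)(i₀,h,λ) = (i, g h, λ)` multiplies middle coordinates, which reaches all of `Γ`.
-/

namespace ReesMatrix

variable {G I Λ : Type*} [Group G] (A : Λ → I → G)

def idempotents : Set (I × G × Λ) := {q | reesMul A q q = q}

@[simp]
theorem reesMul_mk (i j : I) (g h : G) (l μ : Λ) :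
    reesMul A (i, g, l) (j, h, μ) = (i, g * A l j * h, μ) := rfl

theorem mem_idempotents_iff {p : I × G × Λ} : p ∈ idempotents A ↔ p.2.1 = (A p.2.2 p.1)⁻¹ := by
  obtain ⟨i, g, l⟩ := p
  simp only [idempotents, Set.mem_ofPred_eq, reesMul_mk, Prod.mk.injEq, true_and, and_true]
  rw [mul_assoc, mul_eq_left, mul_eq_one_iff_eq_inv']

theorem mem_closure_range_of_semigroupClosure {p : I × G × Λ}
    (h : SemigroupClosure (reesMul A) (idempotents A) p) :
    p.2.1 ∈ Subgroup.closure (Set.range fun li : Λ × I => A li.1 li.2) := by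
  have entry_mem (l : Λ) (i : I) :
      A l i ∈ Subgroup.closure (Set.range fun li : Λ × I => A li.1 li.2) :=
    Subgroup.subset_closure ⟨(l, i), rfl⟩
  induction h with
  | base hp => exact (mem_idempotents_iff A).mp hp ▸ inv_mem (entry_mem _ _)
  | mul _ _ iha ihb => exact mul_mem (mul_mem iha (entry_mem _ _)) ihb

variable {A} {i₀ : I} {l₀ : Λ}

theorem semigroupClosure_one (hrow : ∀ i, A l₀ i = 1) (hcol : ∀ l, A l i₀ = 1) (i : I) (l : Λ) :
    SemigroupClosure (reesMul A) (idempotents A) (i, 1, l) := by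
  have hi : ((i, 1, l₀) : I × G × Λ) ∈ idempotents A := by
    simp [mem_idempotents_iff, hrow]
  have hl : ((i₀, 1, l) : I × G × Λ) ∈ idempotents A := by
    simp [mem_idempotents_iff, hcol]
  simpa [hrow] using SemigroupClosure.mul (mul := reesMul A) (.base hi) (.base hl)

theorem semigroupClosure_entry (hrow : ∀ i, A l₀ i = 1) (hcol : ∀ l, A l i₀ = 1)
    (μ : Λ) (j i : I) (l : Λ) :
    SemigroupClosure (reesMul A) (idempotents A) (i, A μ j, l) := by
  simpa using SemigroupClosure.mul (semigroupClosure_one hrow hcol i μ)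
    (semigroupClosure_one hrow hcol j l)

theorem semigroupClosure_entry_inv (hrow : ∀ i, A l₀ i = 1) (hcol : ∀ l, A l i₀ = 1)
    (μ : Λ) (j i : I) (l : Λ) :
    SemigroupClosure (reesMul A) (idempotents A) (i, (A μ j)⁻¹, l) := by
  have hjμ : ((j, (A μ j)⁻¹, μ) : I × G × Λ) ∈ idempotents A := by
    simp [mem_idempotents_iff]
  simpa [hrow, hcol] using SemigroupClosure.mul
    (SemigroupClosure.mul (semigroupClosure_one hrow hcol i l₀) (.base hjμ))
    (semigroupClosure_one hrow hcol i₀ l)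

theorem semigroupClosure_mul (hcol : ∀ l, A l i₀ = 1) {i : I} {l : Λ} {g h : G}
    (hg : SemigroupClosure (reesMul A) (idempotents A) (i, g, l₀))
    (hh : SemigroupClosure (reesMul A) (idempotents A) (i₀, h, l)) :
    SemigroupClosure (reesMul A) (idempotents A) (i, g * h, l) := by
  simpa [hcol] using SemigroupClosure.mul hg hh

theorem semigroupClosure_of_mem_closure_range (hrow : ∀ i, A l₀ i = 1) (hcol : ∀ l, A l i₀ = 1)
    {g : G} (hg : g ∈ Subgroup.closure (Set.range fun li : Λ × I => A li.1 li.2)) (i : I) (l : Λ) :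
    SemigroupClosure (reesMul A) (idempotents A) (i, g, l) := by
  induction hg using Subgroup.closure_induction'' generalizing i l with
  | mem _ hx =>
    obtain ⟨⟨μ, j⟩, rfl⟩ := hx
    exact semigroupClosure_entry hrow hcol μ j i l
  | inv_mem _ hx =>
    obtain ⟨⟨μ, j⟩, rfl⟩ := hx
    exact semigroupClosure_entry_inv hrow hcol μ j i l
  | one => exact semigroupClosure_one hrow hcol i l
  | mul _ _ _ _ ihx ihy => exact semigroupClosure_mul hcol (ihx i l₀) (ihy i₀ l)

end ReesMatrix

/-- If the Rees matrix semigroup `M[G;I,Λ;A]` is normalised with respect to the idempotent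
`e = (i₀,1,l₀)` and `Γ` is the subgroup of `G` generated by the entries of the sandwich
matrix `A`, then the subsemigroup generated by the idempotents of `M[G;I,Λ;A]` is exactly
`I × Γ × Λ = M[Γ;I,Λ;A]`. -/
theorem stmt_0 {G I Λ : Type*} [Group G] (A : Λ → I → G) (i₀ : I) (l₀ : Λ)
    (hrow : ∀ i : I, A l₀ i = 1) (hcol : ∀ l : Λ, A l i₀ = 1) :
    ∀ p : I × G × Λ,
      SemigroupClosure (reesMul A) {q : I × G × Λ | reesMul A q q = q} p ↔
        p.2.1 ∈ Subgroup.closure (Set.range fun li : Λ × I => A li.1 li.2) := by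
  rintro ⟨i, g, l⟩
  exact ⟨ReesMatrix.mem_closure_range_of_semigroupClosure A,
    fun hg => ReesMatrix.semigroupClosure_of_mem_closure_range hrow hcol hg i l⟩
end

section
/- Let (X,T,σ) be a minimal system with an equicontinuous factor π : (X,σ) → (Y,δ) such that E^fib(X) = Cov. Let e be a minimal idempotent of E(X) and s : Y → eE(X)e a lift of π̃ satisfying s(δᵗ(y)) = σᵗ s(y) and s(-y) = s(y)^{-1}. Define, for y ∈ Y, the map ŝ(y) : eX → eX by ŝ(y)(x) = s(π(x)+y) s(π(x))^{-1}(x). Then ŝ : Y → eE(X)e is a right inverse to π̃ which satisfies ŝ(δᵗ(y)) = σᵗ ŝ(y) and is a group homomorphism. -/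
variable {T X Y : Type*}

/-- The Ellis semigroup of the action `σ` of `T` on `X`: the closure of `{σᵗ : t ∈ T}` in
`X → X` with the topology of pointwise convergence. -/
def EllisA [TopologicalSpace X] (σ : T → X → X) : Set (X → X) :=
  closure (Set.range σ)

/-- The fibre-preserving part `E^fib(X)`: the kernel of `π̃ : E(X) → Y`, i.e. the elements
of the Ellis semigroup preserving each fibre of `π`. -/
def EfibA [TopologicalSpace X] (σ : T → X → X) (π : X → Y) : Set (X → X) :=
  { f | f ∈ EllisA σ ∧ ∀ x, π (f x) = π x }

/-- Two points are proximal if `inf_{t ∈ T} d(σᵗ x, σᵗ x') = 0`. -/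
def ProxA [MetricSpace X] (σ : T → X → X) (x x' : X) : Prop :=
  ∀ ε : ℝ, 0 < ε → ∃ t : T, dist (σ t x) (σ t x') < ε

/-- `y` is regular for `π` if the proximal relation restricted to `π⁻¹(y)` is trivial. -/
def RegA [MetricSpace X] (σ : T → X → X) (π : X → Y) (y : Y) : Prop :=
  ∀ x x' : X, π x = y → π x' = y → ProxA σ x x' → x = x'

/-- The subsemigroup `T` of `E^fib(X)` of elements acting as the identity on every regular
fibre. -/
def TrivA [MetricSpace X] (σ : T → X → X) (π : X → Y) : Set (X → X) :=
  { f | f ∈ EfibA σ π ∧ ∀ x, RegA σ π (π x) → f x = x }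

/-- The semigroup `Cov` of covariant families `f̃(y) ∈ E^fib_y(X)`, realised as the set of
self-maps `g` of `X` commuting with the action and agreeing on each fibre with some element
of `E^fib(X)`;  the element of `Cov` corresponding to `g` is `y ↦ g|_{π⁻¹(y)}`. -/
def CovA [MetricSpace X] (σ : T → X → X) (π : X → Y) : Set (X → X) :=
  { g | (∀ (t : T) (x : X), g (σ t x) = σ t (g x)) ∧
        ∀ y : Y, ∃ h ∈ EfibA σ π, ∀ x, π x = y → g x = h x }

/-!
On the fibre `π⁻¹(y')`, the map `s(y)⁻¹ ŝ(y)` agrees with `s(y)⁻¹ s(y' + y) s(y')⁻¹`, an element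
of `E^fib(X)`. Since `s(y)⁻¹ ŝ(y)` also commutes with the action, it is a covariant family, so
`E^fib(X) = Cov` makes it a single element `g` of `E(X)`, and `ŝ(y) = s(y) g ∈ eE(X)e`.
Equivariance and the homomorphism property are direct computations with the covariance of `s`
and `s(-y) = s(y)⁻¹`.
-/

open Function

section Ellis

variable [TopologicalSpace X] {σ : T → X → X}

lemma comp_mem_ellisA [Add T] (hσc : ∀ t, Continuous (σ t))
    (hσadd : ∀ s t : T, σ (s + t) = σ s ∘ σ t) {f g : X → X}
    (hf : f ∈ EllisA σ) (hg : g ∈ EllisA σ) : f ∘ g ∈ EllisA σ := by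
  have left_comp : ∀ t, σ t ∘ g ∈ EllisA σ := fun t =>
    closure_minimal (t := (σ t ∘ ·) ⁻¹' EllisA σ)
      (Set.range_subset_iff.2 fun u => subset_closure (s := Set.range σ) ⟨t + u, hσadd t u⟩)
      (isClosed_closure.preimage (continuous_pi fun x => (hσc t).comp (continuous_apply x))) hg
  exact closure_minimal (t := (· ∘ g) ⁻¹' EllisA σ) (Set.range_subset_iff.2 left_comp)
    (isClosed_closure.preimage (continuous_pi fun x => continuous_apply (g x))) hf

lemma commute_of_mem_ellisA [AddCommMagma T] [T2Space X] (hσc : ∀ t, Continuous (σ t))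
    (hσadd : ∀ s t : T, σ (s + t) = σ s ∘ σ t) {f : X → X} (hf : f ∈ EllisA σ) (t : T) :
    Function.Commute f (σ t) := by
  have hclosed : IsClosed {g : X → X | g ∘ σ t = σ t ∘ g} :=
    isClosed_eq (continuous_pi fun x => continuous_apply (σ t x))
      (continuous_pi fun x => (hσc t).comp (continuous_apply x))
  have hrange : Set.range σ ⊆ {g : X → X | g ∘ σ t = σ t ∘ g} := by
    rintro _ ⟨u, rfl⟩
    show σ u ∘ σ t = σ t ∘ σ u
    rw [← hσadd, ← hσadd, add_comm]
  exact semiconj_iff_comp_eq.2 (closure_minimal hrange hclosed hf)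

end Ellis

/-- The map `ŝ` of the paper, defined on all of `X`; `s(-y)` stands for `s(y)⁻¹`. -/
def correctedLift [Add Y] [Neg Y] (π : X → Y) (s : Y → X → X) (y : Y) (x : X) : X :=
  s (π x + y) (s (-π x) x)

section CorrectedLift

variable [AddCommGroup Y] {π : X → Y} {s : Y → X → X}

lemma proj_correctedLift (hssec : ∀ y x, π (s y x) = y + π x) (y : Y) (x : X) :
    π (correctedLift π s y x) = π x + y := by
  simp only [correctedLift, hssec]
  abel

lemma correctedLift_add (hssec : ∀ y x, π (s y x) = y + π x) {e : X → X}
    (hsinv : ∀ y, s (-y) ∘ s y = e) (hes : ∀ y x, e (s y x) = s y x) (y₁ y₂ : Y) (x : X) :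
    correctedLift π s (y₁ + y₂) x = correctedLift π s y₁ (correctedLift π s y₂ x) := by
  have hcancel : s (-(π x + y₂)) (correctedLift π s y₂ x) = s (-π x) x :=
    (congrFun (hsinv _) _).trans (hes _ _)
  calc correctedLift π s (y₁ + y₂) x = s (π x + y₂ + y₁) (s (-π x) x) := by
        rw [correctedLift, add_comm y₁, add_assoc]
    _ = correctedLift π s y₁ (correctedLift π s y₂ x) := by
        rw [correctedLift.eq_1 π s y₁, proj_correctedLift hssec, hcancel]

variable {σ : T → X → X} {ι : T → Y}

lemma correctedLift_translate (hscov : ∀ t y, s (ι t + y) = σ t ∘ s y) (t : T) (y : Y) (x : X) :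
    correctedLift π s (ι t + y) x = σ t (correctedLift π s y x) := by
  rw [correctedLift, correctedLift, add_left_comm, hscov]
  rfl

lemma correctedLift_commute (hπeq : ∀ t x, π (σ t x) = ι t + π x)
    (hscov : ∀ t y, s (ι t + y) = σ t ∘ s y) (hscomm : ∀ y t, Function.Commute (s y) (σ t))
    (y : Y) (t : T) : Function.Commute (correctedLift π s y) (σ t) := by
  intro x
  have hinv : s (-π (σ t x)) (σ t x) = s (-π x) x :=
    calc s (-π (σ t x)) (σ t x) = σ t (s (-π (σ t x)) x) := hscomm _ _ x
      _ = s (ι t + -π (σ t x)) x := (congrFun (hscov _ _) x).symm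
      _ = s (-π x) x := by rw [hπeq]; congr 2; abel
  rw [correctedLift, hinv, hπeq, add_assoc, hscov]
  rfl

variable [MetricSpace X] [AddCommGroup T]

lemma comp_correctedLift_mem_covA (hσc : ∀ t, Continuous (σ t))
    (hσadd : ∀ s t : T, σ (s + t) = σ s ∘ σ t) (hπeq : ∀ t x, π (σ t x) = ι t + π x)
    (hsE : ∀ y, s y ∈ EllisA σ) (hssec : ∀ y x, π (s y x) = y + π x)
    (hscov : ∀ t y, s (ι t + y) = σ t ∘ s y) (y : Y) :
    s (-y) ∘ correctedLift π s y ∈ CovA σ π := by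
  have hscomm y t := commute_of_mem_ellisA hσc hσadd (hsE y) t
  refine ⟨fun t x => ?_, fun y' => ⟨s (-y) ∘ s (y' + y) ∘ s (-y'),
    ⟨comp_mem_ellisA hσc hσadd (hsE _) (comp_mem_ellisA hσc hσadd (hsE _) (hsE _)), fun x => ?_⟩,
    fun x hx => ?_⟩⟩
  · simp only [comp_apply, correctedLift_commute hπeq hscov hscomm y t x, hscomm (-y) t _]
  · simp only [comp_apply, hssec]
    abel
  · simp only [comp_apply, correctedLift, hx]

lemma correctedLift_mem_ellisA (hσc : ∀ t, Continuous (σ t))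
    (hσadd : ∀ s t : T, σ (s + t) = σ s ∘ σ t) (hπeq : ∀ t x, π (σ t x) = ι t + π x)
    (hCov : EfibA σ π = CovA σ π) (hsE : ∀ y, s y ∈ EllisA σ)
    (hssec : ∀ y x, π (s y x) = y + π x) (hscov : ∀ t y, s (ι t + y) = σ t ∘ s y)
    {e : X → X} (hsinv : ∀ y, s y ∘ s (-y) = e) (hes : ∀ y x, e (s y x) = s y x) (y : Y) :
    correctedLift π s y ∈ EllisA σ := by
  have hg := comp_correctedLift_mem_covA hσc hσadd hπeq hsE hssec hscov y
  rw [← hCov] at hg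
  have hfactor : correctedLift π s y = s y ∘ (s (-y) ∘ correctedLift π s y) :=
    funext fun x => ((congrFun (hsinv y) _).trans (hes _ _)).symm
  rw [hfactor]
  exact comp_mem_ellisA hσc hσadd (hsE y) hg.1

end CorrectedLift

theorem stmt_7_general [AddCommGroup T] [MetricSpace X]
    [AddCommGroup Y]
    (σ : T → X → X) (π : X → Y) (ι : T → Y)
    (hσc : ∀ t, Continuous (σ t))
    (hσadd : ∀ s t : T, σ (s + t) = σ s ∘ σ t)
    (hπeq : ∀ (t : T) (x : X), π (σ t x) = ι t + π x)
    (hCov : EfibA σ π = CovA σ π)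
    (e : X → X) (he : e ∈ EllisA σ) (heid : e ∘ e = e)
    (s : Y → X → X)
    (hscorner : ∀ y : Y, ∃ f ∈ EllisA σ, s y = e ∘ f ∘ e)
    (hssec : ∀ (y : Y) (x : X), π (s y x) = y + π x)
    (hscov : ∀ (t : T) (y : Y), s (ι t + y) = σ t ∘ s y)
    (hsinv : ∀ y : Y, s (-y) ∘ s y = e ∧ s y ∘ s (-y) = e) :
    ∀ sHat : Y → X → X,
      (∀ (y : Y) (x : X), sHat y x = s (π x + y) (s (-(π x)) x)) →
      -- ŝ(y) belongs to the group eE(X)e (as a map on eX)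
      (∀ y : Y, ∃ f ∈ EllisA σ, ∀ x : X, sHat y (e x) = e (f (e (e x)))) ∧
      -- ŝ is a right inverse to π̃
      (∀ (y : Y) (x : X), π (sHat y (e x)) = y + π (e x)) ∧
      -- ŝ is equivariant: ŝ(δᵗ y) = σᵗ ŝ(y)
      (∀ (t : T) (y : Y) (x : X), sHat (ι t + y) (e x) = σ t (sHat y (e x))) ∧
      -- ŝ is a group homomorphism (multiplication in eE(X)e being composition)
      (∀ (y₁ y₂ : Y) (x : X), sHat (y₁ + y₂) (e x) = sHat y₁ (sHat y₂ (e x))) := by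
  rintro sHat hsHat
  obtain rfl : sHat = correctedLift π s := funext₂ hsHat
  have hee : ∀ x, e (e x) = e x := congrFun heid
  have hsE : ∀ y, s y ∈ EllisA σ := fun y => by
    obtain ⟨f, hf, hsy⟩ := hscorner y
    exact hsy ▸ comp_mem_ellisA hσc hσadd he (comp_mem_ellisA hσc hσadd hf he)
  have hes : ∀ y x, e (s y x) = s y x := fun y x => by
    obtain ⟨f, -, hsy⟩ := hscorner y
    rw [hsy]
    exact hee _
  refine ⟨fun y => ⟨correctedLift π s y, ?_, fun x => ?_⟩,
    fun y x => by rw [proj_correctedLift hssec, add_comm],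
    fun t y x => correctedLift_translate hscov t y (e x),
    fun y₁ y₂ x => correctedLift_add hssec (fun y => (hsinv y).1) hes y₁ y₂ (e x)⟩
  · exact correctedLift_mem_ellisA hσc hσadd hπeq hCov hsE hssec hscov (fun y => (hsinv y).2) hes y
  · rw [hee]
    exact (hes _ _).symm

/-- Let `(X,T,σ)` be a minimal system with an equicontinuous factor `π : X → Y` such that
`E^fib(X) = Cov`.  Let `e` be a minimal idempotent of `E(X)` and `s : Y → eE(X)e` a lift of
`π̃` with `s(δᵗ y) = σᵗ s(y)` and `s(-y) = s(y)⁻¹`.  Define `ŝ(y)(x) = s(π(x)+y) s(π(x))⁻¹ (x)`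
on `eX`.  Then `ŝ : Y → eE(X)e` is a right inverse of `π̃`, satisfies
`ŝ(δᵗ y) = σᵗ ŝ(y)`, and is a group homomorphism. -/
theorem stmt_7 [AddCommGroup T] [MetricSpace X] [CompactSpace X]
    [AddCommGroup Y] [TopologicalSpace Y] [IsTopologicalAddGroup Y] [CompactSpace Y]
    (σ : T → X → X) (π : X → Y) (ι : T → Y)
    (hσc : ∀ t, Continuous (σ t)) (hσ0 : σ 0 = id)
    (hσadd : ∀ s t : T, σ (s + t) = σ s ∘ σ t)
    (hmin : ∀ x : X, Dense (Set.range fun t => σ t x))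
    (hπc : Continuous π) (hπs : Function.Surjective π)
    (hπeq : ∀ (t : T) (x : X), π (σ t x) = ι t + π x)
    (hιadd : ∀ s t : T, ι (s + t) = ι s + ι t) (hιd : DenseRange ι)
    (hCov : EfibA σ π = CovA σ π)
    (e : X → X) (he : e ∈ EllisA σ) (heid : e ∘ e = e)
    (hemin : ∀ p ∈ EllisA σ, p ∘ p = p → p ∘ e = p → e ∘ p = p → p = e)
    (s : Y → X → X)
    (hscorner : ∀ y : Y, ∃ f ∈ EllisA σ, s y = e ∘ f ∘ e)
    (hssec : ∀ (y : Y) (x : X), π (s y x) = y + π x)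
    (hscov : ∀ (t : T) (y : Y), s (ι t + y) = σ t ∘ s y)
    (hsinv : ∀ y : Y, s (-y) ∘ s y = e ∧ s y ∘ s (-y) = e) :
    ∀ sHat : Y → X → X,
      (∀ (y : Y) (x : X), sHat y x = s (π x + y) (s (-(π x)) x)) →
      -- ŝ(y) belongs to the group eE(X)e (as a map on eX)
      (∀ y : Y, ∃ f ∈ EllisA σ, ∀ x : X, sHat y (e x) = e (f (e (e x)))) ∧
      -- ŝ is a right inverse to π̃
      (∀ (y : Y) (x : X), π (sHat y (e x)) = y + π (e x)) ∧
      -- ŝ is equivariant: ŝ(δᵗ y) = σᵗ ŝ(y)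
      (∀ (t : T) (y : Y) (x : X), sHat (ι t + y) (e x) = σ t (sHat y (e x))) ∧
      -- ŝ is a group homomorphism (multiplication in eE(X)e being composition)
      (∀ (y₁ y₂ : Y) (x : X), sHat (y₁ + y₂) (e x) = sHat y₁ (sHat y₂ (e x))) :=
  stmt_7_general σ π ι hσc hσadd hπeq hCov e he heid s hscorner hssec hscov hsinv
end

section
/- Let θ be a primitive aperiodic bijective simplified substitution of length ℓ and π : X_θ → ℤ_ℓ the odometer factor map. Then the fibre π^{-1}(0) consists exactly of the fixed points of θ, and these are in one-to-one correspondence with the allowed two-letter words of θ. -/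
variable {A : Type*}

/-- The bijections `(θⁿ)_i` in the expansion of the `n`-th power of the bijective
substitution `θ` of length `ℓ`:  `θⁿ(a) = (θⁿ)₀(a) ⋯ (θⁿ)_{ℓⁿ−1}(a)`. -/
def expandPerm (θ : ℕ → Equiv.Perm A) (ℓ : ℕ) : ℕ → ℕ → Equiv.Perm A
  | 0, _ => 1
  | n + 1, k => θ (k % ℓ) * expandPerm θ ℓ n (k / ℓ)

/-- The substitution shift `X_θ`: the set of bi-infinite sequences all of whose finite
subwords occur in some `θᵏ(a)`. -/
def XSet (θ : ℕ → Equiv.Perm A) (ℓ : ℕ) : Set (ℤ → A) :=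
  { x | ∀ (i : ℤ) (m : ℕ), ∃ (k : ℕ) (a : A) (j : ℕ), j + m ≤ ℓ ^ k ∧
      ∀ t : ℕ, t < m → x (i + (t : ℤ)) = expandPerm θ ℓ k (j + t) a }

/-- `θ` is primitive: some power `θᵏ(a)` contains every letter, for every `a`. -/
def IsPrimitive (θ : ℕ → Equiv.Perm A) (ℓ : ℕ) : Prop :=
  ∃ k : ℕ, 0 < k ∧ ∀ a b : A, ∃ i : ℕ, i < ℓ ^ k ∧ expandPerm θ ℓ k i a = b

/-- `θ` is simplified: `θ₀ = θ_{ℓ-1} = id` and each word `θ(a)` contains all letters. -/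
def IsSimplified (θ : ℕ → Equiv.Perm A) (ℓ : ℕ) : Prop :=
  θ 0 = 1 ∧ θ (ℓ - 1) = 1 ∧ ∀ a b : A, ∃ i : ℕ, i < ℓ ∧ θ i a = b

/-- The left shift `σⁿ` on bi-infinite sequences. -/
def shiftSeq (n : ℤ) (x : ℤ → A) : ℤ → A := fun j => x (j + n)

/-- The substitution `θ` applied to a bi-infinite sequence (with the block of `x₀`
starting at index `0`). -/
def substSeq (θ : ℕ → Equiv.Perm A) (ℓ : ℕ) (x : ℤ → A) : ℤ → A :=
  fun m => θ ((m.emod (ℓ : ℤ)).toNat) (x (m.ediv (ℓ : ℤ)))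

theorem shiftSeq_mem {θ : ℕ → Equiv.Perm A} {ℓ : ℕ} {x : ℤ → A} (n : ℤ)
    (hx : x ∈ XSet θ ℓ) : shiftSeq n x ∈ XSet θ ℓ := by
  intro i m
  obtain ⟨k, a, j, h1, h2⟩ := hx (i + n) m
  refine ⟨k, a, j, h1, fun t ht => ?_⟩
  have h3 := h2 t ht
  show x (i + (t : ℤ) + n) = _
  rw [show i + (t : ℤ) + n = i + n + (t : ℤ) by ring]
  exact h3

/-- The shift, as a self-map of the substitution shift `X_θ`. -/
def shiftX (θ : ℕ → Equiv.Perm A) (ℓ : ℕ) (n : ℤ) (x : ↥(XSet θ ℓ)) : ↥(XSet θ ℓ) :=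
  ⟨shiftSeq n x.1, shiftSeq_mem n x.2⟩

/-- The Ellis semigroup `E(X_θ)`: the closure of `{σⁿ : n ∈ ℤ}` in the space of self-maps
of `X_θ` with the topology of pointwise convergence. -/
def EllisZ [TopologicalSpace A] (θ : ℕ → Equiv.Perm A) (ℓ : ℕ) :
    Set (↥(XSet θ ℓ) → ↥(XSet θ ℓ)) :=
  closure (Set.range fun n : ℤ => shiftX θ ℓ n)

/-
Since `θ₀ = θ_{ℓ-1} = id`, the substitution does not change the letters at positions `-1` and `0`,
and on the window `[-ℓⁿ, ℓⁿ)` the sequence `θⁿ(y)` is the word `θⁿ(y₋₁) θⁿ(y₀)`, so it depends only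
on the central pair `(y₋₁, y₀)`. Hence the iterates `θⁿ(⋯aa.bb⋯)` converge to a fixed point, and
every `x = θⁿ(zₙ)` in the fibre agrees with this limit for `(a, b) = (x₋₁, x₀)`, as `zₙ` has the
same central pair as `x`. The limit lies in `X_θ` when `ab` occurs in some `θᴷ(c)`: its windows
are then subwords of `θⁿ⁺ᴷ(c)`.
-/
theorem IsSimplified.two_le [Nontrivial A] {θ : ℕ → Equiv.Perm A} {ℓ : ℕ}
    (h : IsSimplified θ ℓ) : 2 ≤ ℓ := by
  obtain ⟨a, b, hab⟩ := exists_pair_ne A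
  obtain ⟨i, hi, hθ⟩ := h.2.2 a b
  by_contra hl
  obtain rfl : i = 0 := by omega
  rw [h.1] at hθ
  exact hab hθ

namespace Substitution

variable {θ : ℕ → Equiv.Perm A} {ℓ : ℕ}

theorem expandPerm_add (n K P : ℕ) :
    expandPerm θ ℓ (n + K) P = expandPerm θ ℓ n P * expandPerm θ ℓ K (P / ℓ ^ n) := by
  induction n generalizing P with
  | zero => simp [expandPerm]
  | succ n ih =>
    rw [Nat.add_right_comm, expandPerm, ih, expandPerm, mul_assoc, Nat.div_div_eq_div_mul,
      ← pow_succ']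

theorem substSeq_apply (y : ℤ → A) (m : ℤ) :
    substSeq θ ℓ y m = θ ((m % (ℓ : ℤ)).toNat) (y (m / ℓ)) := rfl

theorem substSeq_apply_mul_add (hl : 0 < ℓ) (y : ℤ → A) (q : ℤ) (s : ℕ) :
    substSeq θ ℓ y (q * ℓ + s) = θ (s % ℓ) (y (q + (s / ℓ : ℕ))) := by
  have hl' : (ℓ : ℤ) ≠ 0 := by exact_mod_cast hl.ne'
  rw [substSeq_apply, add_comm, Int.add_mul_emod_self_right, Int.add_mul_ediv_right _ _ hl',
    add_comm]
  norm_cast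

theorem iterate_substSeq_apply (hl : 0 < ℓ) (y : ℤ → A) (n : ℕ) (p : ℤ) (s : ℕ) :
    (substSeq θ ℓ)^[n] y (p * ℓ ^ n + s) = expandPerm θ ℓ n s (y (p + (s / ℓ ^ n : ℕ))) := by
  induction n generalizing s with
  | zero => simp [expandPerm]
  | succ n ih =>
    rw [Function.iterate_succ_apply', pow_succ, ← mul_assoc, substSeq_apply_mul_add hl, ih,
      Nat.div_div_eq_div_mul, ← pow_succ', expandPerm, Equiv.Perm.mul_apply]

theorem iterate_substSeq_apply_of_eq_expandPerm (hl : 0 < ℓ) {y : ℤ → A} {K : ℕ} {c : A}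
    {q : ℤ} (hy : ∀ k : ℕ, y (k - q) = expandPerm θ ℓ K k c) (n P : ℕ) :
    (substSeq θ ℓ)^[n] y (-q * ℓ ^ n + P) = expandPerm θ ℓ (n + K) P c := by
  rw [iterate_substSeq_apply hl, neg_add_eq_sub, hy, expandPerm_add, Equiv.Perm.mul_apply]

def withCenter (a b : A) : Set (ℤ → A) := {y | y (-1) = a ∧ y 0 = b}

def centralWindow (ℓ n : ℕ) : Set ℤ := Set.Ico (-(ℓ : ℤ) ^ n) ((ℓ : ℤ) ^ n)

theorem mem_centralWindow_of_natAbs_lt {m : ℤ} {n : ℕ} (h : m.natAbs < ℓ ^ n) :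
    m ∈ centralWindow ℓ n := by
  have : (m.natAbs : ℤ) < (ℓ : ℤ) ^ n := by exact_mod_cast h
  constructor <;> omega

theorem mem_centralWindow_natAbs (hl : 2 ≤ ℓ) (m : ℤ) : m ∈ centralWindow ℓ m.natAbs :=
  mem_centralWindow_of_natAbs_lt (Nat.lt_pow_self hl)

theorem centralWindow_mono (hl : 0 < ℓ) {n n' : ℕ} (h : n ≤ n') :
    centralWindow ℓ n ⊆ centralWindow ℓ n' := by
  have : (ℓ : ℤ) ^ n ≤ (ℓ : ℤ) ^ n' := pow_le_pow_right₀ (by exact_mod_cast hl) h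
  exact Set.Ico_subset_Ico (by omega) this

theorem ediv_mem_centralWindow (hl : 0 < ℓ) {m : ℤ} {n : ℕ} (h : m ∈ centralWindow ℓ (n + 1)) :
    m / ℓ ∈ centralWindow ℓ n := by
  have hl' : (0 : ℤ) < ℓ := by exact_mod_cast hl
  obtain ⟨h₁, h₂⟩ := h
  rw [pow_succ] at h₁ h₂
  exact ⟨(Int.le_ediv_iff_mul_le hl').2 (by linarith), (Int.ediv_lt_iff_lt_mul hl').2 h₂⟩

theorem iterate_substSeq_congr (hl : 0 < ℓ) {a b : A} {y y' : ℤ → A} (hy : y ∈ withCenter a b)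
    (hy' : y' ∈ withCenter a b) {n : ℕ} {m : ℤ} (hm : m ∈ centralWindow ℓ n) :
    (substSeq θ ℓ)^[n] y m = (substSeq θ ℓ)^[n] y' m := by
  obtain ⟨h₁, h₂⟩ := hm
  lift m + (ℓ : ℤ) ^ n to ℕ using (by omega) with s hs
  have hm : m = -1 * (ℓ : ℤ) ^ n + s := by omega
  have hs : s / ℓ ^ n < 2 :=
    Nat.div_lt_of_lt_mul (by exact_mod_cast (show (s : ℤ) < (ℓ : ℤ) ^ n * 2 by omega))
  rw [hm, iterate_substSeq_apply hl, iterate_substSeq_apply hl]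
  interval_cases s / ℓ ^ n <;> simp [hy.1, hy.2, hy'.1, hy'.2]

theorem mapsTo_substSeq_withCenter (hl : 0 < ℓ) (h₀ : θ 0 = 1) (h₁ : θ (ℓ - 1) = 1) (a b : A) :
    Set.MapsTo (substSeq θ ℓ) (withCenter a b) (withCenter a b) := by
  rintro y ⟨ha, hb⟩
  constructor
  · have := substSeq_apply_mul_add (θ := θ) hl y (-1) (ℓ - 1)
    rwa [Nat.mod_eq_of_lt (by omega), Nat.div_eq_of_lt (by omega), h₁, Nat.cast_zero, add_zero,
      ha, show -1 * (ℓ : ℤ) + ((ℓ - 1 : ℕ) : ℤ) = -1 by omega] at this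
  · have := substSeq_apply_mul_add (θ := θ) hl y 0 0
    simpa [h₀, hb] using this

theorem iterate_substSeq_eq_of_le (hl : 0 < ℓ) (h₀ : θ 0 = 1) (h₁ : θ (ℓ - 1) = 1) {a b : A}
    {y : ℤ → A} (hy : y ∈ withCenter a b) {n n' : ℕ} (hn : n ≤ n') {m : ℤ}
    (hm : m ∈ centralWindow ℓ n) :
    (substSeq θ ℓ)^[n'] y m = (substSeq θ ℓ)^[n] y m := by
  obtain ⟨k, rfl⟩ := Nat.exists_eq_add_of_le hn
  rw [Function.iterate_add_apply]
  exact iterate_substSeq_congr hl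
    ((mapsTo_substSeq_withCenter hl h₀ h₁ a b).iterate k hy) hy hm

def seed (a b : A) : ℤ → A := fun k => if k < 0 then a else b

theorem seed_mem_withCenter (a b : A) : seed a b ∈ withCenter a b := by
  simp [seed, withCenter]

/-- The limit of `θⁿ(⋯aa.bb⋯)`: by `iterate_substSeq_eq_of_le` these iterates stabilise on
`centralWindow ℓ n`, which contains `m` once `n = |m|`. -/
def fixedPoint (θ : ℕ → Equiv.Perm A) (ℓ : ℕ) (a b : A) : ℤ → A :=
  fun m => (substSeq θ ℓ)^[m.natAbs] (seed a b) m

theorem fixedPoint_apply (hl : 2 ≤ ℓ) (h₀ : θ 0 = 1) (h₁ : θ (ℓ - 1) = 1)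
    {a b : A} {y : ℤ → A} (hy : y ∈ withCenter a b) {n : ℕ} {m : ℤ}
    (hm : m ∈ centralWindow ℓ n) : fixedPoint θ ℓ a b m = (substSeq θ ℓ)^[n] y m := by
  have hl₀ : 0 < ℓ := by omega
  have hseed := seed_mem_withCenter a b
  rw [fixedPoint, ← iterate_substSeq_eq_of_le hl₀ h₀ h₁ hseed (le_max_right n _)
    (mem_centralWindow_natAbs hl m), iterate_substSeq_eq_of_le hl₀ h₀ h₁ hseed
    (le_max_left _ m.natAbs) hm, iterate_substSeq_congr hl₀ hseed hy hm]

theorem fixedPoint_mem_withCenter (hl : 2 ≤ ℓ) (h₀ : θ 0 = 1) (h₁ : θ (ℓ - 1) = 1)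
    (a b : A) : fixedPoint θ ℓ a b ∈ withCenter a b := by
  have hseed := seed_mem_withCenter a b
  exact ⟨(fixedPoint_apply hl h₀ h₁ hseed (n := 0) (by simp [centralWindow])).trans hseed.1,
    (fixedPoint_apply hl h₀ h₁ hseed (n := 0) (by simp [centralWindow])).trans hseed.2⟩

theorem substSeq_fixedPoint (hl : 2 ≤ ℓ) (h₀ : θ 0 = 1) (h₁ : θ (ℓ - 1) = 1) (a b : A) :
    substSeq θ ℓ (fixedPoint θ ℓ a b) = fixedPoint θ ℓ a b := by
  funext m
  have hm : m ∈ centralWindow ℓ (m.natAbs + 1) :=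
    centralWindow_mono (by omega) m.natAbs.le_succ (mem_centralWindow_natAbs hl m)
  have hseed := seed_mem_withCenter a b
  rw [fixedPoint_apply hl h₀ h₁ hseed hm, Function.iterate_succ_apply', substSeq_apply,
    substSeq_apply, fixedPoint_apply hl h₀ h₁ hseed (ediv_mem_centralWindow (by omega) hm)]

theorem eq_fixedPoint_of_forall_iterate (hl : 2 ≤ ℓ) (h₀ : θ 0 = 1) (h₁ : θ (ℓ - 1) = 1)
    {x : ℤ → A} (hx : ∀ n : ℕ, ∃ z, (substSeq θ ℓ)^[n] z = x) :
    x = fixedPoint θ ℓ (x (-1)) (x 0) := by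
  funext m
  obtain ⟨z, rfl⟩ := hx m.natAbs
  have hz : z ∈ withCenter (z (-1)) (z 0) := ⟨rfl, rfl⟩
  obtain ⟨hz₁, hz₀⟩ := (mapsTo_substSeq_withCenter (by omega) h₀ h₁ _ _).iterate m.natAbs hz
  rw [hz₁, hz₀, fixedPoint_apply hl h₀ h₁ hz (mem_centralWindow_natAbs hl m)]

theorem fixedPoint_mem_XSet (hl : 2 ≤ ℓ) (h₀ : θ 0 = 1) (h₁ : θ (ℓ - 1) = 1)
    {a b c : A} {K J : ℕ} (hJ : J + 2 ≤ ℓ ^ K)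
    (ha : expandPerm θ ℓ K J c = a) (hb : expandPerm θ ℓ K (J + 1) c = b) :
    fixedPoint θ ℓ a b ∈ XSet θ ℓ := by
  intro i m
  -- `θᴷ(c)`, placed so that its letters `J` and `J + 1` sit at positions `-1` and `0`
  set y : ℤ → A := fun k => expandPerm θ ℓ K (k + (J + 1 : ℕ)).toNat c
  have hy : y ∈ withCenter a b := by
    refine ⟨?_, ?_⟩
    · show expandPerm θ ℓ K ((-1 : ℤ) + (J + 1 : ℕ)).toNat c = a
      rw [← ha]; congr; omega
    · show expandPerm θ ℓ K ((0 : ℤ) + (J + 1 : ℕ)).toNat c = b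
      rw [← hb]; congr; omega
  have hyK : ∀ k : ℕ, y (k - (J + 1 : ℕ)) = expandPerm θ ℓ K k c := by simp [y]
  obtain ⟨n, hn⟩ : ∃ n, i.natAbs + m < ℓ ^ n := ⟨_, Nat.lt_pow_self hl⟩
  have hQ : (J + 1) * ℓ ^ n + ℓ ^ n ≤ ℓ ^ (n + K) := by
    rw [← Nat.succ_mul, pow_add, mul_comm]
    exact Nat.mul_le_mul_left _ hJ
  have hQ' : ℓ ^ n ≤ (J + 1) * ℓ ^ n := Nat.le_mul_of_pos_left _ J.succ_pos
  have hpos : 0 ≤ i + ((J + 1) * ℓ ^ n : ℕ) := by omega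
  refine ⟨n + K, c, (i + ((J + 1) * ℓ ^ n : ℕ)).toNat, by omega, fun t ht => ?_⟩
  have hw : i + t ∈ centralWindow ℓ n := mem_centralWindow_of_natAbs_lt (by omega)
  rw [fixedPoint_apply hl h₀ h₁ hy hw, ← iterate_substSeq_apply_of_eq_expandPerm (by omega) hyK]
  refine congrArg ((substSeq θ ℓ)^[n] y) ?_
  rw [Nat.cast_add (i + _).toNat, Int.toNat_of_nonneg hpos]
  push_cast
  ring

end Substitution

open Substitution

theorem stmt_9_general (θ : ℕ → Equiv.Perm A) (ℓ : ℕ)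
    (haper : (XSet θ ℓ).Infinite) (hsimp : IsSimplified θ ℓ) :
    {x ∈ XSet θ ℓ | ∀ n : ℕ, ∃ z ∈ XSet θ ℓ, (substSeq θ ℓ)^[n] z = x} =
      {x ∈ XSet θ ℓ | substSeq θ ℓ x = x} ∧
    Set.BijOn (fun x : ℤ → A => (x (-1), x 0))
      {x ∈ XSet θ ℓ | substSeq θ ℓ x = x}
      {p : A × A | ∃ (k : ℕ) (c : A) (j : ℕ), j + 2 ≤ ℓ ^ k ∧
        expandPerm θ ℓ k j c = p.1 ∧ expandPerm θ ℓ k (j + 1) c = p.2} := by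
  have : Nontrivial A := by
    rw [← not_subsingleton_iff_nontrivial]
    intro
    exact haper Set.subsingleton_of_subsingleton.finite
  have hl := hsimp.two_le
  obtain ⟨h₀, h₁, -⟩ := hsimp
  have hfix {x : ℤ → A} (hx : substSeq θ ℓ x = x) : x = fixedPoint θ ℓ (x (-1)) (x 0) :=
    eq_fixedPoint_of_forall_iterate hl h₀ h₁ fun n => ⟨x, Function.iterate_fixed hx n⟩
  refine ⟨?_, ?_, ?_, ?_⟩
  · ext x
    refine and_congr_right fun hxX =>
      ⟨fun hx => ?_, fun hx n => ⟨x, hxX, Function.iterate_fixed hx n⟩⟩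
    rw [eq_fixedPoint_of_forall_iterate hl h₀ h₁ fun n => (hx n).imp fun _ hz => hz.2]
    exact substSeq_fixedPoint hl h₀ h₁ _ _
  · rintro x ⟨hxX, -⟩
    obtain ⟨k, c, j, hj, hw⟩ := hxX (-1) 2
    exact ⟨k, c, j, hj, by simpa using (hw 0 two_pos).symm,
      by simpa using (hw 1 one_lt_two).symm⟩
  · rintro x ⟨-, hx⟩ y ⟨-, hy⟩ hxy
    rw [hfix hx, hfix hy]
    exact congrArg₂ _ (congrArg Prod.fst hxy) (congrArg Prod.snd hxy)
  · rintro ⟨a, b⟩ ⟨K, c, J, hJ, ha, hb⟩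
    have hc := fixedPoint_mem_withCenter hl h₀ h₁ a b
    exact ⟨fixedPoint θ ℓ a b, ⟨fixedPoint_mem_XSet hl h₀ h₁ hJ ha hb,
      substSeq_fixedPoint hl h₀ h₁ a b⟩, Prod.ext hc.1 hc.2⟩

/-- For a primitive aperiodic bijective simplified substitution `θ` of length `ℓ`, the fibre
`π⁻¹(0)` of the odometer factor map, i.e. `⋂ₙ θⁿ(X_θ)`, consists exactly of the fixed points
of `θ`, and the map `x ↦ (x₋₁, x₀)` is a bijection from it onto the set of allowed two-letter
words of `θ`. -/
theorem stmt_9 [Fintype A] (θ : ℕ → Equiv.Perm A) (ℓ : ℕ) (hl : 0 < ℓ)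
    (hprim : IsPrimitive θ ℓ) (haper : (XSet θ ℓ).Infinite) (hsimp : IsSimplified θ ℓ) :
    {x ∈ XSet θ ℓ | ∀ n : ℕ, ∃ z ∈ XSet θ ℓ, (substSeq θ ℓ)^[n] z = x} =
      {x ∈ XSet θ ℓ | substSeq θ ℓ x = x} ∧
    Set.BijOn (fun x : ℤ → A => (x (-1), x 0))
      {x ∈ XSet θ ℓ | substSeq θ ℓ x = x}
      {p : A × A | ∃ (k : ℕ) (c : A) (j : ℕ), j + 2 ≤ ℓ ^ k ∧
        expandPerm θ ℓ k j c = p.1 ∧ expandPerm θ ℓ k (j + 1) c = p.2} :=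
  stmt_9_general θ ℓ haper hsimp
end

section
/- Let θ be a bijective substitution of length ℓ that is simplified. Then the structure group G_θ is generated by the R-set I_θ, and I_θ = { θ_i θ_{i-1}^{-1} : i = 1, …, ℓ−1 }. -/
variable {A : Type*}

/-- The generators `(θⁿ)_i` of the structure group. -/
def GensSet (θ : ℕ → Equiv.Perm A) (ℓ : ℕ) : Set (Equiv.Perm A) :=
  { g | ∃ (n i : ℕ), i < ℓ ^ n ∧ g = expandPerm θ ℓ n i }

/-- The structure group `G_θ`: the subgroup of the permutation group of the alphabet
generated by all `(θⁿ)_i`. -/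
def Gtheta (θ : ℕ → Equiv.Perm A) (ℓ : ℕ) : Subgroup (Equiv.Perm A) :=
  Subgroup.closure (GensSet θ ℓ)

/-- The R-set `I_θ = { (θⁿ)_i (θⁿ)_{i-1}⁻¹ : n ∈ ℕ, 1 ≤ i ≤ ℓⁿ - 1 }`. -/
def RSet (θ : ℕ → Equiv.Perm A) (ℓ : ℕ) : Set (Equiv.Perm A) :=
  { g | ∃ (n i : ℕ), 1 ≤ i ∧ i < ℓ ^ n ∧
      g = expandPerm θ ℓ n i * (expandPerm θ ℓ n (i - 1))⁻¹ }

/-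
Every `(θⁿ)_i` is the telescoping product of the quotients `(θⁿ)_k (θⁿ)_{k-1}⁻¹`, `k ≤ i`,
since `(θⁿ)₀ = θ₀ⁿ = id`; hence `I_θ` generates `G_θ`. Writing `i = ℓq + r`, we have
`(θⁿ⁺¹)_i = θ_r (θⁿ)_q`. For `r ≥ 1` the quotient at `i` is `θ_r θ_{r-1}⁻¹`; for `r = 0` it is
`θ₀ (θⁿ)_q ((θⁿ)_{q-1})⁻¹ θ_{ℓ-1}⁻¹ = (θⁿ)_q ((θⁿ)_{q-1})⁻¹`, and induction on `n` applies.
-/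

variable {θ : ℕ → Equiv.Perm A} {ℓ : ℕ}

lemma expandPerm_zero_right (h0 : θ 0 = 1) (n : ℕ) : expandPerm θ ℓ n 0 = 1 := by
  induction n with
  | zero => rfl
  | succ n ih => simp [expandPerm, h0, ih]

lemma expandPerm_succ_mul_add {r : ℕ} (hr : r < ℓ) (n q : ℕ) :
    expandPerm θ ℓ (n + 1) (ℓ * q + r) = θ r * expandPerm θ ℓ n q := by
  have hl : 0 < ℓ := by omega
  simp only [expandPerm, Nat.mul_add_mod, Nat.mod_eq_of_lt hr, Nat.mul_add_div hl,
    Nat.div_eq_of_lt hr, add_zero]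

lemma expandPerm_one {j : ℕ} (hj : j < ℓ) : expandPerm θ ℓ 1 j = θ j := by
  simpa [expandPerm] using expandPerm_succ_mul_add (θ := θ) hj 0 0

lemma exists_expandPerm_quotient_eq (h0 : θ 0 = 1) (hlast : θ (ℓ - 1) = 1) :
    ∀ {n i : ℕ}, 1 ≤ i → i < ℓ ^ n → ∃ j, 1 ≤ j ∧ j < ℓ ∧
      expandPerm θ ℓ n i * (expandPerm θ ℓ n (i - 1))⁻¹ = θ j * (θ (j - 1))⁻¹ := by
  intro n
  induction n with
  | zero => intro i h1 h2; simp at h2; omega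
  | succ n ih =>
    intro i h1 h2
    have hl : 0 < ℓ := Nat.pos_of_ne_zero fun h => by simp [h] at h2
    obtain ⟨q, r, hr, rfl⟩ : ∃ q r, r < ℓ ∧ i = ℓ * q + r :=
      ⟨i / ℓ, i % ℓ, Nat.mod_lt _ hl, (Nat.div_add_mod i ℓ).symm⟩
    rcases Nat.eq_zero_or_pos r with rfl | hr0
    · obtain ⟨q, rfl⟩ : ∃ q', q = q' + 1 := ⟨q - 1, by rcases q with _ | q <;> simp_all⟩
      have hq : q + 1 < ℓ ^ n :=
        Nat.lt_of_mul_lt_mul_left (a := ℓ) (by simpa [pow_succ'] using h2)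
      have hpred : ℓ * (q + 1) + 0 - 1 = ℓ * q + (ℓ - 1) := by rw [Nat.mul_succ]; omega
      rw [hpred, expandPerm_succ_mul_add hr, expandPerm_succ_mul_add (by omega), h0, hlast,
        one_mul, one_mul]
      exact ih (by omega) hq
    · have hpred : ℓ * q + r - 1 = ℓ * q + (r - 1) := by omega
      refine ⟨r, hr0, hr, ?_⟩
      rw [hpred, expandPerm_succ_mul_add hr, expandPerm_succ_mul_add (by omega)]
      group

lemma expandPerm_mem_closure_rSet (h0 : θ 0 = 1) (n : ℕ) :
    ∀ {i : ℕ}, i < ℓ ^ n → expandPerm θ ℓ n i ∈ Subgroup.closure (RSet θ ℓ)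
  | 0, _ => by rw [expandPerm_zero_right h0]; exact Subgroup.one_mem _
  | i + 1, hi => by
    have hquot : expandPerm θ ℓ n (i + 1) * (expandPerm θ ℓ n i)⁻¹ ∈ RSet θ ℓ :=
      ⟨n, i + 1, by omega, hi, rfl⟩
    simpa using Subgroup.mul_mem _ (Subgroup.subset_closure hquot)
      (expandPerm_mem_closure_rSet h0 n (i := i) (by omega))

lemma rSet_subset_gtheta : RSet θ ℓ ⊆ Gtheta θ ℓ := by
  rintro g ⟨n, i, hi, hlt, rfl⟩
  exact Subgroup.mul_mem _ (Subgroup.subset_closure ⟨n, i, hlt, rfl⟩)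
    (Subgroup.inv_mem _ (Subgroup.subset_closure ⟨n, i - 1, by omega, rfl⟩))

lemma closure_rSet_eq_gtheta (h0 : θ 0 = 1) : Subgroup.closure (RSet θ ℓ) = Gtheta θ ℓ := by
  refine le_antisymm ((Subgroup.closure_le _).2 rSet_subset_gtheta) ?_
  rw [Gtheta, Subgroup.closure_le]
  rintro g ⟨n, i, hi, rfl⟩
  exact expandPerm_mem_closure_rSet h0 n hi

theorem stmt_12_general (θ : ℕ → Equiv.Perm A) (ℓ : ℕ)
    (hsimp : IsSimplified θ ℓ) :
    Subgroup.closure (RSet θ ℓ) = Gtheta θ ℓ ∧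
    RSet θ ℓ = { g : Equiv.Perm A | ∃ i : ℕ, 1 ≤ i ∧ i < ℓ ∧ g = θ i * (θ (i - 1))⁻¹ } := by
  obtain ⟨h0, hlast, -⟩ := hsimp
  refine ⟨closure_rSet_eq_gtheta h0, Set.ext fun g => ⟨?_, ?_⟩⟩
  · rintro ⟨n, i, hi, hlt, rfl⟩
    exact exists_expandPerm_quotient_eq h0 hlast hi hlt
  · rintro ⟨j, hj, hjl, rfl⟩
    exact ⟨1, j, hj, by simpa using hjl, by rw [expandPerm_one hjl, expandPerm_one (by omega)]⟩

/-- For a simplified bijective substitution `θ` of length `ℓ`, the structure group `G_θ` is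
generated by the R-set `I_θ`, and `I_θ = { θ_i θ_{i-1}⁻¹ : i = 1, …, ℓ−1 }`. -/
theorem stmt_12 [Fintype A] (θ : ℕ → Equiv.Perm A) (ℓ : ℕ) (hl : 0 < ℓ)
    (hsimp : IsSimplified θ ℓ) :
    Subgroup.closure (RSet θ ℓ) = Gtheta θ ℓ ∧
    RSet θ ℓ = { g : Equiv.Perm A | ∃ i : ℕ, 1 ≤ i ∧ i < ℓ ∧ g = θ i * (θ (i - 1))⁻¹ } :=
  stmt_12_general θ ℓ hsimp
end

section
/- Let X be a set, G a subgroup of the symmetric group S_X acting transitively on X, and x ∈ X. Then the quotient N_G(Stab_G(x)) / Stab_G(x) of the normaliser in G of the stabiliser of x by the stabiliser of x is isomorphic to the centraliser C_{S_X}(G) of G in S_X. -/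
/-!
Every point is `g • x`, and an element `n` of the normaliser `N` of `H = Stab_G(x)` acts on `X`
by `g • x ↦ (g * n⁻¹) • x`; this is well defined because `Stab_G(n • x) = n H n⁻¹ = H`.
These maps commute with `G`, giving a homomorphism `N → C_{S_X}(G)` with kernel `H`. It is onto:
if `σ` commutes with `G` and `σ x = g • x`, then `Stab_G(g • x) = Stab_G(σ x) = H`, so `g ∈ N`,
and `σ` is the map attached to `g⁻¹`.
-/

open Subgroup

namespace MulAction

variable {G X : Type*} [Group G] [MulAction G X]

theorem mem_normalizer_stabilizer_iff {x : X} {g : G} :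
    g ∈ normalizer (stabilizer G x : Set G) ↔ stabilizer G (g • x) = stabilizer G x := by
  rw [stabilizer_smul_eq_stabilizer_map_conj, mem_normalizer_iff_map_conj_eq]
  rfl

theorem mul_smul_eq_of_mem_normalizer {x : X} {n : G}
    (hn : n ∈ normalizer (stabilizer G x : Set G)) {g h : G} (hgh : g • x = h • x) :
    (g * n) • x = (h * n) • x := by
  have hstab : h⁻¹ * g ∈ stabilizer G (n • x) := by
    rw [mem_normalizer_stabilizer_iff.mp hn, mem_stabilizer_iff, mul_smul, hgh, inv_smul_smul]
  rw [mem_stabilizer_iff, mul_smul, inv_smul_eq_iff] at hstab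
  rw [mul_smul, mul_smul, hstab]

theorem stabilizer_apply_eq_of_commute {σ : Equiv.Perm X}
    (hσ : ∀ (g : G) (y : X), σ (g • y) = g • σ y) (y : X) :
    stabilizer G (σ y) = stabilizer G y := by
  ext g
  rw [mem_stabilizer_iff, mem_stabilizer_iff, ← hσ, σ.injective.eq_iff]

theorem mem_centralizer_range_toPermHom_iff {σ : Equiv.Perm X} :
    σ ∈ centralizer ((toPermHom G X).range : Set (Equiv.Perm X)) ↔
      ∀ (g : G) (y : X), σ (g • y) = g • σ y := by
  rw [mem_centralizer_iff, MonoidHom.coe_range, Set.forall_mem_range]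
  refine forall_congr' fun g => ?_
  simp only [Equiv.Perm.ext_iff, Equiv.Perm.mul_apply, toPermHom_apply, toPerm_apply, eq_comm]

section Transitive

variable (G) [IsPretransitive G X] (x : X)

/-- Depends on the chosen `g` with `g • x = y` unless `n` normalises `Stab_G(x)`. -/
noncomputable def normalizerAct (n : G) (y : X) : X :=
  ((exists_smul_eq G x y).choose * n⁻¹) • x

variable {G x}

theorem normalizerAct_smul {n : G} (hn : n ∈ normalizer (stabilizer G x : Set G)) (g : G) :
    normalizerAct G x n (g • x) = (g * n⁻¹) • x :=
  mul_smul_eq_of_mem_normalizer (inv_mem hn) (exists_smul_eq G x (g • x)).choose_spec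

theorem normalizerAct_one (y : X) : normalizerAct G x 1 y = y := by
  rw [normalizerAct, inv_one, mul_one, (exists_smul_eq G x y).choose_spec]

theorem normalizerAct_normalizerAct {m n : G} (hm : m ∈ normalizer (stabilizer G x : Set G))
    (hn : n ∈ normalizer (stabilizer G x : Set G)) (y : X) :
    normalizerAct G x m (normalizerAct G x n y) = normalizerAct G x (m * n) y := by
  obtain ⟨g, rfl⟩ := exists_smul_eq G x y
  rw [normalizerAct_smul hn, normalizerAct_smul hm, normalizerAct_smul (mul_mem hm hn),
    mul_inv_rev, mul_assoc]

variable (G x)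

noncomputable def normalizerToEnd : normalizer (stabilizer G x : Set G) →* Function.End X where
  toFun n := normalizerAct G x n
  map_one' := funext normalizerAct_one
  map_mul' m n := funext fun y => (normalizerAct_normalizerAct m.2 n.2 y).symm

noncomputable def normalizerToPerm : normalizer (stabilizer G x : Set G) →* Equiv.Perm X :=
  Equiv.Perm.equivUnitsEnd.symm.toMonoidHom.comp (normalizerToEnd G x).toHomUnits

theorem normalizerToPerm_mem_centralizer (n : normalizer (stabilizer G x : Set G)) :
    normalizerToPerm G x n ∈ centralizer ((toPermHom G X).range : Set (Equiv.Perm X)) := by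
  rw [mem_centralizer_range_toPermHom_iff]
  intro g y
  obtain ⟨h, rfl⟩ := exists_smul_eq G x y
  change normalizerAct G x n _ = g • normalizerAct G x n _
  rw [smul_smul, normalizerAct_smul n.2, normalizerAct_smul n.2, mul_assoc, mul_smul]

noncomputable def normalizerToCentralizer : normalizer (stabilizer G x : Set G) →*
    centralizer ((toPermHom G X).range : Set (Equiv.Perm X)) :=
  (normalizerToPerm G x).codRestrict _ (normalizerToPerm_mem_centralizer G x)

theorem normalizerToCentralizer_apply (n : normalizer (stabilizer G x : Set G)) (y : X) :
    (normalizerToCentralizer G x n : Equiv.Perm X) y = normalizerAct G x n y :=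
  rfl

theorem ker_normalizerToCentralizer :
    (normalizerToCentralizer G x).ker =
      (stabilizer G x).subgroupOf (normalizer (stabilizer G x : Set G)) := by
  ext n
  rw [MonoidHom.mem_ker, mem_subgroupOf, Subtype.ext_iff, Equiv.Perm.ext_iff]
  simp only [OneMemClass.coe_one, Equiv.Perm.coe_one, id_eq]
  constructor
  · intro h
    have hx := h ((1 : G) • x)
    rw [normalizerToCentralizer_apply, normalizerAct_smul n.2, one_mul, one_smul] at hx
    exact inv_mem_iff.mp (mem_stabilizer_iff.mpr hx)
  · intro hn y
    obtain ⟨g, rfl⟩ := exists_smul_eq G x y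
    rw [normalizerToCentralizer_apply, normalizerAct_smul n.2, mul_smul,
      mem_stabilizer_iff.mp (inv_mem hn)]

theorem normalizerToCentralizer_surjective :
    Function.Surjective (normalizerToCentralizer G x) := by
  rintro ⟨σ, hσ⟩
  rw [mem_centralizer_range_toPermHom_iff] at hσ
  obtain ⟨g, hg⟩ := exists_smul_eq G x (σ x)
  have hgN : g ∈ normalizer (stabilizer G x : Set G) := by
    rw [mem_normalizer_stabilizer_iff, hg, stabilizer_apply_eq_of_commute hσ]
  refine ⟨⟨g⁻¹, inv_mem hgN⟩, Subtype.ext (Equiv.ext fun y => ?_)⟩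
  obtain ⟨h, rfl⟩ := exists_smul_eq G x y
  rw [normalizerToCentralizer_apply, normalizerAct_smul (inv_mem hgN), inv_inv, mul_smul, hg, hσ]

noncomputable def quotientNormalizerStabilizerEquivCentralizer :
    normalizer (stabilizer G x : Set G) ⧸
        (stabilizer G x).subgroupOf (normalizer (stabilizer G x : Set G)) ≃*
      centralizer ((toPermHom G X).range : Set (Equiv.Perm X)) :=
  (QuotientGroup.quotientMulEquivOfEq (ker_normalizerToCentralizer G x).symm).trans
    (QuotientGroup.quotientKerEquivOfSurjective _ (normalizerToCentralizer_surjective G x))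

end Transitive

end MulAction

theorem Subgroup.range_toPermHom_eq {X : Type*} (G : Subgroup (Equiv.Perm X)) :
    (MulAction.toPermHom G X).range = G :=
  (congrArg MonoidHom.range (MonoidHom.ext fun _ => Equiv.ext fun _ => rfl)).trans
    G.range_subtype

/-- Let `G` be a subgroup of the permutation group of `X` acting transitively on `X` and let
`x ∈ X`. Then `N_G(Stab_G(x)) / Stab_G(x)` is isomorphic to the centraliser of `G` in `S_X`. -/
theorem stmt_17 {X : Type*} (G : Subgroup (Equiv.Perm X)) (x : X)
    (htrans : ∀ y z : X, ∃ g ∈ G, g • y = z) :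
    haveI : ((MulAction.stabilizer G x).subgroupOf
        (Subgroup.normalizer (MulAction.stabilizer G x : Set G))).Normal :=
      Subgroup.normal_in_normalizer
    Nonempty
      ((Subgroup.normalizer (MulAction.stabilizer G x : Set G) ⧸
          (MulAction.stabilizer G x).subgroupOf (Subgroup.normalizer (MulAction.stabilizer G x : Set G))) ≃*
        Subgroup.centralizer (G : Set (Equiv.Perm X))) := by
  have : MulAction.IsPretransitive G X :=
    ⟨fun y z => (htrans y z).elim fun g ⟨hg, hgyz⟩ => ⟨⟨g, hg⟩, hgyz⟩⟩
  exact ⟨(MulAction.quotientNormalizerStabilizerEquivCentralizer G x).trans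
    (MulEquiv.subgroupCongr (by rw [G.range_toPermHom_eq]))⟩
end
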